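/- Let E ∈ M_n(ℝ) be tropically idempotent of full rank n and let G_E be the group of tropical monomial matrices commuting with E. Then G_E is an internal direct product R × Σ, where R = {λ ⊗ I_n : λ ∈ ℝ} ≅ (ℝ, +) is the group of tropical scalings of the identity, and Σ = {G ∈ G_E : maximum cycle mean of G is 0} is a finite group embedding in the symmetric group S_n. -/

import Mathlib

open Finset Matrix

/-- Tropical (max-plus) matrix multiplication on n × n real matrices. -/
noncomputable def tmul {n : ℕ} [NeZero n] (A B : Matrix (Fin n) (Fin n) ℝ) :
    Matrix (Fin n) (Fin n) ℝ :=
  fun i j => univ.sup' univ_nonempty (fun k => A i k + B k j)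

/-- Tropical (max-plus) matrix multiplication over 𝕋 = ℝ ∪ {-∞} = WithBot ℝ. -/
noncomputable def tmulT {n : ℕ} (A B : Matrix (Fin n) (Fin n) (WithBot ℝ)) :
    Matrix (Fin n) (Fin n) (WithBot ℝ) :=
  fun i j => univ.sup (fun k => A i k + B k j)

/-- Embedding of a real matrix into matrices over ℝ ∪ {-∞}. -/
def emb {n : ℕ} (A : Matrix (Fin n) (Fin n) ℝ) : Matrix (Fin n) (Fin n) (WithBot ℝ) :=
  A.map (fun a => (a : WithBot ℝ))

/-- A tropical monomial (unit) matrix. -/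
def IsMonomial {n : ℕ} (G : Matrix (Fin n) (Fin n) (WithBot ℝ)) : Prop :=
  ∃ (σ : Equiv.Perm (Fin n)) (lam : Fin n → ℝ),
    ∀ i j, G i j = if j = σ i then (lam i : WithBot ℝ) else ⊥

/-- The tropical scaling λ ⊗ I_n of the identity: λ on the diagonal, -∞ off. -/
def scalId (n : ℕ) (lam : ℝ) : Matrix (Fin n) (Fin n) (WithBot ℝ) :=
  fun i j => if j = i then (lam : WithBot ℝ) else ⊥

/-- Total weight of the cycle c 0 → c 1 → ⋯ → c k → c 0. -/
noncomputable def cycleWeightT {n k : ℕ} (M : Matrix (Fin n) (Fin n) (WithBot ℝ))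
    (c : Fin (k + 1) → Fin n) : WithBot ℝ :=
  ∑ i, M (c i) (c (i + 1))

/-- M has maximum cycle mean 0. -/
def MaxCycleMeanZero {n : ℕ} (M : Matrix (Fin n) (Fin n) (WithBot ℝ)) : Prop :=
  (∀ (k : ℕ) (c : Fin (k + 1) → Fin n), cycleWeightT M c ≤ 0) ∧
  (∃ (k : ℕ) (c : Fin (k + 1) → Fin n), cycleWeightT M c = 0)

section helpers
variable {n : ℕ} [NeZero n]

def mono (σ : Equiv.Perm (Fin n)) (a : Fin n → ℝ) : Matrix (Fin n) (Fin n) (WithBot ℝ) :=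
  fun i j => if j = σ i then (a i : WithBot ℝ) else ⊥

omit [NeZero n] in
lemma sup_single (k₀ : Fin n) (v : WithBot ℝ) (f : Fin n → WithBot ℝ)
    (hf : ∀ k, f k = if k = k₀ then v else ⊥) : univ.sup f = v := by
  apply le_antisymm
  · exact Finset.sup_le fun k _ => by rw [hf]; split <;> simp
  · have : f k₀ = v := by rw [hf]; simp
    exact this ▸ Finset.le_sup (mem_univ k₀)

/-- the commuting condition (★) -/
def StarCond (E : Matrix (Fin n) (Fin n) ℝ) (σ : Equiv.Perm (Fin n)) (a : Fin n → ℝ) : Prop :=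
  ∀ i j, a i + E (σ i) (σ j) = a j + E i j

lemma tmulT_mono_emb (σ : Equiv.Perm (Fin n)) (a : Fin n → ℝ) (E : Matrix (Fin n) (Fin n) ℝ) :
    tmulT (mono σ a) (emb E) = fun i j => ((a i + E (σ i) j : ℝ) : WithBot ℝ) := by
  funext i j
  apply sup_single (σ i)
  intro k
  by_cases hk : k = σ i
  · subst hk; simp [mono, emb]
  · simp [mono, hk, WithBot.bot_add]

lemma tmulT_emb_mono (σ : Equiv.Perm (Fin n)) (a : Fin n → ℝ) (E : Matrix (Fin n) (Fin n) ℝ) :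
    tmulT (emb E) (mono σ a) = fun i j => ((E i (σ.symm j) + a (σ.symm j) : ℝ) : WithBot ℝ) := by
  funext i j
  apply sup_single (σ.symm j)
  intro k
  by_cases hk : k = σ.symm j
  · subst hk; simp [mono, emb]
  · have hj : j ≠ σ k := fun h => hk (by simp [h])
    rw [if_neg hk]
    simp [mono, emb, hj, WithBot.add_bot]

lemma commute_iff (σ : Equiv.Perm (Fin n)) (a : Fin n → ℝ) (E : Matrix (Fin n) (Fin n) ℝ) :
    tmulT (mono σ a) (emb E) = tmulT (emb E) (mono σ a) ↔ StarCond E σ a := by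
  rw [tmulT_mono_emb, tmulT_emb_mono]
  constructor
  · intro h i j
    have h2 := congrFun (congrFun h i) (σ j)
    rw [Equiv.symm_apply_apply] at h2
    have h3 : a i + E (σ i) (σ j) = E i j + a j := by exact_mod_cast h2
    linarith
  · intro h
    funext i j
    have h3 := h i (σ.symm j)
    rw [Equiv.apply_symm_apply] at h3
    have h4 : a i + E (σ i) j = E i (σ.symm j) + a (σ.symm j) := by linarith
    exact_mod_cast h4

/-- Key consequence of (★): n · a i = ∑ a + (row sum at i) − (row sum at σ i). -/
lemma star_key {E : Matrix (Fin n) (Fin n) ℝ} {σ : Equiv.Perm (Fin n)} {a : Fin n → ℝ}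
    (h : StarCond E σ a) (i : Fin n) :
    (n : ℝ) * a i = (∑ j, a j) + (∑ j, E i j) - (∑ j, E (σ i) j) := by
  have h1 : ∑ j, (a i + E (σ i) (σ j)) = ∑ j, (a j + E i j) :=
    Finset.sum_congr rfl fun j _ => h i j
  rw [Finset.sum_add_distrib, Finset.sum_add_distrib, Finset.sum_const] at h1
  have h2 : ∑ j, E (σ i) (σ j) = ∑ j, E (σ i) j := Equiv.sum_comp σ _
  rw [h2] at h1
  simp only [card_univ, Fintype.card_fin, nsmul_eq_mul] at h1
  linarith

lemma weight_closed {k : ℕ} (σ : Equiv.Perm (Fin n)) (a : Fin n → ℝ) (c : Fin (k+1) → Fin n)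
    (hc : ∀ t, c (t + 1) = σ (c t)) :
    cycleWeightT (mono σ a) c = ((∑ t, a (c t) : ℝ) : WithBot ℝ) := by
  unfold cycleWeightT
  have : ∀ t : Fin (k+1), mono σ a (c t) (c (t+1)) = ((a (c t) : ℝ) : WithBot ℝ) := by
    intro t; simp [mono, hc t]
  rw [Finset.sum_congr rfl fun t _ => this t]
  push_cast
  rfl

lemma weight_not_closed {k : ℕ} (σ : Equiv.Perm (Fin n)) (a : Fin n → ℝ) (c : Fin (k+1) → Fin n)
    (hc : ¬ ∀ t, c (t + 1) = σ (c t)) :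
    cycleWeightT (mono σ a) c = ⊥ := by
  push_neg at hc
  obtain ⟨t, ht⟩ := hc
  have hterm : mono σ a (c t) (c (t+1)) = ⊥ := by simp [mono, ht]
  unfold cycleWeightT
  rw [← Finset.add_sum_erase univ _ (mem_univ t), hterm, WithBot.bot_add]

lemma sum_along {E : Matrix (Fin n) (Fin n) ℝ} {σ : Equiv.Perm (Fin n)} {a : Fin n → ℝ}
    (h : StarCond E σ a) {k : ℕ} (c : Fin (k+1) → Fin n) (hc : ∀ t, c (t + 1) = σ (c t)) :
    (n : ℝ) * ∑ t, a (c t) = (k + 1 : ℝ) * ∑ i, a i := by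
  have h1 : ∑ t : Fin (k+1), (n : ℝ) * a (c t)
      = ∑ t : Fin (k+1), ((∑ j, a j) + (∑ j, E (c t) j) - (∑ j, E (σ (c t)) j)) :=
    Finset.sum_congr rfl fun t _ => star_key h (c t)
  have h2 : ∑ t : Fin (k+1), (∑ j, E (σ (c t)) j) = ∑ t : Fin (k+1), (∑ j, E (c t) j) := by
    have : ∀ t : Fin (k+1), (∑ j, E (σ (c t)) j) = (∑ j, E (c (t+1)) j) := by
      intro t; rw [hc t]
    rw [Finset.sum_congr rfl fun t _ => this t]
    exact Equiv.sum_comp (Equiv.addRight (1 : Fin (k+1))) (fun t => ∑ j, E (c t) j)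
  rw [← Finset.mul_sum] at h1
  simp only [Finset.sum_sub_distrib, Finset.sum_add_distrib, Finset.sum_const, card_univ,
    Fintype.card_fin, nsmul_eq_mul, h2] at h1
  rw [h1]; push_cast; ring

lemma exists_closed (σ : Equiv.Perm (Fin n)) :
    ∃ (k : ℕ) (c : Fin (k+1) → Fin n), ∀ t, c (t + 1) = σ (c t) := by
  have hN : 0 < orderOf σ := orderOf_pos σ
  obtain ⟨k, hk⟩ : ∃ k, k + 1 = orderOf σ := ⟨orderOf σ - 1, Nat.succ_pred_eq_of_pos hN⟩
  have i0 : Fin n := ⟨0, Nat.pos_of_ne_zero (NeZero.ne n)⟩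
  refine ⟨k, fun t => (σ ^ (t : ℕ)) i0, fun t => ?_⟩
  by_cases ht : t = Fin.last k
  · subst ht
    have h1 : (Fin.last k + 1 : Fin (k+1)) = 0 := by
      ext; rw [Fin.val_add_one, if_pos rfl]; simp
    have h2 : σ ((σ ^ ((Fin.last k : Fin (k+1)) : ℕ)) i0) = (σ ^ (k + 1)) i0 := by
      rw [Fin.val_last, pow_succ']
      simp [Equiv.Perm.mul_apply]
    simp only [h1, h2, hk, pow_orderOf_eq_one]
    simp
  · have h1 : ((t + 1 : Fin (k+1)) : ℕ) = (t : ℕ) + 1 := by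
      rw [Fin.val_add_one, if_neg ht]
    simp only [h1, pow_succ']
    simp [Equiv.Perm.mul_apply]

lemma mcm_iff {E : Matrix (Fin n) (Fin n) ℝ} {σ : Equiv.Perm (Fin n)} {a : Fin n → ℝ}
    (h : StarCond E σ a) : MaxCycleMeanZero (mono σ a) ↔ ∑ i, a i = 0 := by
  have hn : (n : ℝ) ≠ 0 := Nat.cast_ne_zero.mpr (NeZero.ne n)
  constructor
  · rintro ⟨-, k, c, hc0⟩
    by_cases hc : ∀ t, c (t + 1) = σ (c t)
    · rw [weight_closed σ a c hc] at hc0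
      have hsum : ∑ t, a (c t) = 0 := by exact_mod_cast hc0
      have h1 := sum_along h c hc
      rw [hsum, mul_zero] at h1
      rcases mul_eq_zero.mp h1.symm with h2 | h2
      · exact absurd h2 (by positivity)
      · exact h2
    · rw [weight_not_closed σ a c hc] at hc0
      exact absurd hc0 (by simp)
  · intro hsum
    have hzero : ∀ (k : ℕ) (c : Fin (k+1) → Fin n), (∀ t, c (t + 1) = σ (c t)) →
        cycleWeightT (mono σ a) c = 0 := by
      intro k c hc
      rw [weight_closed σ a c hc]
      have h1 := sum_along h c hc
      rw [hsum, mul_zero] at h1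
      rcases mul_eq_zero.mp h1 with h2 | h2
      · exact absurd h2 hn
      · rw [h2]; exact WithBot.coe_zero
    constructor
    · intro k c
      by_cases hc : ∀ t, c (t + 1) = σ (c t)
      · rw [hzero k c hc]
      · rw [weight_not_closed σ a c hc]; exact bot_le
    · obtain ⟨k, c, hc⟩ := exists_closed σ
      exact ⟨k, c, hzero k c hc⟩
lemma tmulT_mono_mono (σ τ : Equiv.Perm (Fin n)) (a b : Fin n → ℝ) :
    tmulT (mono σ a) (mono τ b) = mono (σ.trans τ) (fun i => a i + b (σ i)) := by
  funext i j
  apply sup_single (σ i)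
  intro k
  by_cases hk : k = σ i
  · subst hk
    simp only [mono, if_pos rfl, Equiv.trans_apply]
    by_cases hj : j = τ (σ i)
    · subst hj; simp
    · simp [hj]
  · simp [mono, hk, WithBot.bot_add]

omit [NeZero n] in
lemma scal_eq_mono (lam : ℝ) : scalId n lam = mono (Equiv.refl (Fin n)) (fun _ => lam) := rfl

lemma tmulT_scal_left (lam : ℝ) (M : Matrix (Fin n) (Fin n) (WithBot ℝ)) :
    tmulT (scalId n lam) M = fun i j => (lam : WithBot ℝ) + M i j := by
  funext i j
  apply sup_single i
  intro k
  by_cases hk : k = i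
  · subst hk; simp [scalId]
  · simp [scalId, hk, WithBot.bot_add]

lemma tmulT_scal_right (lam : ℝ) (M : Matrix (Fin n) (Fin n) (WithBot ℝ)) :
    tmulT M (scalId n lam) = fun i j => M i j + (lam : WithBot ℝ) := by
  funext i j
  apply sup_single j
  intro k
  by_cases hk : k = j
  · subst hk; simp [scalId]
  · simp [scalId, Ne.symm hk, hk, WithBot.add_bot]

lemma mono_inj {σ τ : Equiv.Perm (Fin n)} {a b : Fin n → ℝ}
    (h : mono σ a = mono τ b) : σ = τ ∧ a = b := by
  have key : ∀ i, σ i = τ i ∧ a i = b i := by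
    intro i
    have h2 := congrFun (congrFun h i) (σ i)
    simp only [mono, if_pos rfl, if_pos rfl] at h2
    by_cases hστ : σ i = τ i
    · refine ⟨hστ, ?_⟩
      rw [if_pos hστ] at h2
      simpa using h2
    · rw [if_neg hστ] at h2
      exact absurd h2 WithBot.coe_ne_bot
  exact ⟨Equiv.ext fun i => (key i).1, funext fun i => (key i).2⟩

end helpers

/-- Let E ∈ M_n(ℝ) be tropically idempotent of full rank n and let
G_E = {monomial G : G ⊗ E = E ⊗ G}. With R = {λ ⊗ I_n : λ ∈ ℝ} and
Σ = {G ∈ G_E : max cycle mean of G is 0}, the group G_E is the internal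
direct product R × Σ: R ⊆ G_E, R ≅ (ℝ,+) via λ ↦ λ ⊗ I_n, every element of
G_E factors uniquely as (λ ⊗ I_n) ⊗ S with S ∈ Σ, scalings commute with
everything, Σ is closed under ⊗ and finite, and Σ embeds (injectively and
multiplicatively) into the symmetric group S_n. -/
theorem units_commuting_direct_product {n : ℕ} [NeZero n]
    (E : Matrix (Fin n) (Fin n) ℝ) (hE : tmul E E = E)
    (hdiag : ∀ i, E i i = 0)
    (hcols : ∀ i j (α : ℝ), i ≠ j → (fun k => E k i) ≠ (fun k => α + E k j)) :
    letI GE : Set (Matrix (Fin n) (Fin n) (WithBot ℝ)) :=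
      {G | IsMonomial G ∧ tmulT G (emb E) = tmulT (emb E) G}
    letI Sig : Set (Matrix (Fin n) (Fin n) (WithBot ℝ)) :=
      {G ∈ GE | MaxCycleMeanZero G}
    (∀ lam : ℝ, scalId n lam ∈ GE) ∧
    (Function.Injective (scalId n)) ∧
    (∀ lam mu : ℝ, scalId n (lam + mu) = tmulT (scalId n lam) (scalId n mu)) ∧
    (∀ G ∈ GE, ∃! p : ℝ × Matrix (Fin n) (Fin n) (WithBot ℝ),
      p.2 ∈ Sig ∧ G = tmulT (scalId n p.1) p.2) ∧
    (∀ (lam : ℝ) (S : Matrix (Fin n) (Fin n) (WithBot ℝ)), S ∈ Sig →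
      tmulT (scalId n lam) S = tmulT S (scalId n lam)) ∧
    (∀ S ∈ Sig, ∀ T ∈ Sig, tmulT S T ∈ Sig) ∧
    Sig.Finite ∧
    (∃ f : Matrix (Fin n) (Fin n) (WithBot ℝ) → Equiv.Perm (Fin n),
      Set.InjOn f Sig ∧
      ∀ S ∈ Sig, ∀ T ∈ Sig, f (tmulT S T) = f S * f T) := by
  classical
  set GE : Set (Matrix (Fin n) (Fin n) (WithBot ℝ)) :=
    {G | IsMonomial G ∧ tmulT G (emb E) = tmulT (emb E) G} with hGE_def
  set Sig : Set (Matrix (Fin n) (Fin n) (WithBot ℝ)) :=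
    {G | G ∈ GE ∧ MaxCycleMeanZero G} with hSig_def
  have hn : (n : ℝ) ≠ 0 := Nat.cast_ne_zero.mpr (NeZero.ne n)
  have hmemGE : ∀ M, M ∈ GE ↔ ∃ σ a, M = mono σ a ∧ StarCond E σ a := by
    intro M
    constructor
    · rintro ⟨⟨σ, a, hM⟩, hcomm⟩
      have hMe : M = mono σ a := by funext i j; exact hM i j
      subst hMe
      exact ⟨σ, a, rfl, (commute_iff σ a E).mp hcomm⟩
    · rintro ⟨σ, a, rfl, hstar⟩
      exact ⟨⟨σ, a, fun i j => rfl⟩, (commute_iff σ a E).mpr hstar⟩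
  have hmemSig : ∀ M, M ∈ Sig ↔
      ∃ σ a, M = mono σ a ∧ StarCond E σ a ∧ ∑ i, a i = 0 := by
    intro M
    constructor
    · rintro ⟨hge, hmcm⟩
      obtain ⟨σ, a, rfl, hstar⟩ := (hmemGE _).mp hge
      exact ⟨σ, a, rfl, hstar, (mcm_iff hstar).mp hmcm⟩
    · rintro ⟨σ, a, rfl, hstar, hsum⟩
      exact ⟨(hmemGE _).mpr ⟨σ, a, rfl, hstar⟩, (mcm_iff hstar).mpr hsum⟩
  -- the injection into Sₙ
  set fperm : Matrix (Fin n) (Fin n) (WithBot ℝ) → Equiv.Perm (Fin n) :=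
    fun M => if h : ∃ σ a, M = mono σ a then h.choose⁻¹ else 1 with hfperm_def
  have hfperm : ∀ (σ : Equiv.Perm (Fin n)) (a : Fin n → ℝ), fperm (mono σ a) = σ⁻¹ := by
    intro σ a
    have h : ∃ σ' a', mono σ a = mono σ' a' := ⟨σ, a, rfl⟩
    rw [hfperm_def]
    simp only [dif_pos h]
    obtain ⟨a', ha'⟩ := h.choose_spec
    rw [← (mono_inj ha').1]
  have hinj : Set.InjOn fperm Sig := by
    intro S hS T hT hST
    obtain ⟨σ, a, rfl, hstarS, hsumS⟩ := (hmemSig _).mp hS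
    obtain ⟨τ, b, rfl, hstarT, hsumT⟩ := (hmemSig _).mp hT
    rw [hfperm, hfperm] at hST
    have hστ : σ = τ := inv_injective hST
    subst hστ
    have key : ∀ i j, a i - b i = a j - b j := by
      intro i j
      have h1 := hstarS i j
      have h2 := hstarT i j
      linarith
    have hab : a = b := by
      funext i
      have hsj : ∑ _j : Fin n, (a i - b i) = ∑ j, (a j - b j) :=
        Finset.sum_congr rfl fun j _ => key i j
      rw [Finset.sum_const, Finset.sum_sub_distrib, hsumS, hsumT, card_univ,
        Fintype.card_fin, nsmul_eq_mul, sub_zero] at hsj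
      have := mul_eq_zero.mp hsj
      rcases this with h' | h'
      · exact absurd h' hn
      · linarith
    rw [hab]
  have hhom : ∀ S ∈ Sig, ∀ T ∈ Sig, fperm (tmulT S T) = fperm S * fperm T := by
    intro S hS T hT
    obtain ⟨σ, a, rfl, -, -⟩ := (hmemSig _).mp hS
    obtain ⟨τ, b, rfl, -, -⟩ := (hmemSig _).mp hT
    rw [tmulT_mono_mono, hfperm, hfperm, hfperm]
    have : σ.trans τ = τ * σ := rfl
    rw [this, _root_.mul_inv_rev]
  refine ⟨?_, ?_, ?_, ?_, ?_, ?_, ?_, fperm, hinj, hhom⟩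
  · -- scalings belong to GE
    intro lam
    refine (hmemGE _).mpr ⟨Equiv.refl _, fun _ => lam, scal_eq_mono lam, ?_⟩
    intro i j
    simp
  · -- injectivity of scalId
    intro a b h
    have i0 : Fin n := ⟨0, Nat.pos_of_ne_zero (NeZero.ne n)⟩
    have h2 := congrFun (congrFun h i0) i0
    simp [scalId] at h2
    exact_mod_cast h2
  · -- scalId is additive
    intro lam mu
    rw [tmulT_scal_left]
    funext i j
    simp only [scalId]
    split
    · norm_cast
    · rw [WithBot.add_bot]
  · -- unique factorization
    intro G hG
    obtain ⟨σ, a, rfl, hstar⟩ := (hmemGE _).mp hG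
    set lam : ℝ := (∑ i, a i) / n with hlam_def
    set b : Fin n → ℝ := fun i => a i - lam with hb_def
    have hsumb : ∑ i, b i = 0 := by
      rw [hb_def]
      rw [Finset.sum_sub_distrib, Finset.sum_const, card_univ, Fintype.card_fin,
        nsmul_eq_mul, hlam_def]
      field_simp
      ring
    have hstarb : StarCond E σ b := by
      intro i j
      have := hstar i j
      simp only [hb_def]
      linarith
    have hfact : mono σ a = tmulT (scalId n lam) (mono σ b) := by
      rw [scal_eq_mono, tmulT_mono_mono, Equiv.refl_trans]
      funext i j
      simp only [mono, hb_def, Equiv.refl_apply]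
      have : lam + (a i - lam) = a i := by ring
      rw [this]
    refine ⟨(lam, mono σ b), ⟨(hmemSig _).mpr ⟨σ, b, rfl, hstarb, hsumb⟩, hfact⟩, ?_⟩
    rintro ⟨mu, T⟩ ⟨hTSig, hTfact⟩
    obtain ⟨τ, c, rfl, hstarc, hsumc⟩ := (hmemSig _).mp hTSig
    rw [scal_eq_mono, tmulT_mono_mono, Equiv.refl_trans] at hTfact
    obtain ⟨hστ, hac⟩ := mono_inj hTfact
    simp only [Equiv.refl_apply] at hac
    have hmu : mu = lam := by
      have h1 : ∑ i, a i = ∑ i, (mu + c i) := by rw [hac]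
      rw [Finset.sum_add_distrib, hsumc, Finset.sum_const, card_univ, Fintype.card_fin,
        nsmul_eq_mul, add_zero] at h1
      rw [hlam_def, h1]
      field_simp
    have hcb : c = b := by
      funext i
      have := congrFun hac i
      simp only [hb_def]
      rw [hmu] at this
      linarith
    rw [hmu, hcb, ← hστ]
  · -- scalings commute with everything
    intro lam S _
    rw [tmulT_scal_left, tmulT_scal_right]
    funext i j
    exact add_comm _ _
  · -- Sig is closed under tmulT
    intro S hS T hT
    obtain ⟨σ, a, rfl, hstarS, hsumS⟩ := (hmemSig _).mp hS
    obtain ⟨τ, b, rfl, hstarT, hsumT⟩ := (hmemSig _).mp hT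
    rw [tmulT_mono_mono]
    refine (hmemSig _).mpr ⟨σ.trans τ, _, rfl, ?_, ?_⟩
    · intro i j
      simp only [Equiv.trans_apply]
      have h1 := hstarS i j
      have h2 := hstarT (σ i) (σ j)
      linarith
    · rw [Finset.sum_add_distrib, hsumS, Equiv.sum_comp σ b, hsumT, add_zero]
  · -- Sig is finite
    exact Set.Finite.of_finite_image (Set.toFinite _) hinj
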